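/- arXiv:1811.11598 — 2 statements merged into one kernel-verified Lean document; each statement's English description precedes it below -/
import Mathlib

section
/- Let M be a compact metric space and let 𝒫(M) be the space of Borel probability measures on M with the narrow (weak) topology and its Borel σ-algebra. Then the evaluation map ev: 𝒫(M) × M → [0,1], ev(μ, x) := μ({x}), is jointly Borel measurable. -/
open MeasureTheory

section Aux

open MeasureTheory Filter Topology Metric Set

variable {M : Type*} [MetricSpace M] [CompactSpace M] [MeasurableSpace M] [BorelSpace M]

lemma aux_usc (r : ℝ) :
    UpperSemicontinuous (fun p : ProbabilityMeasure M × M =>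
      (p.1 : Measure M) (closedBall p.2 r)) := by
  rintro ⟨μ, x⟩ y hy
  dsimp only at hy ⊢
  -- continuity from above at x
  have h_iInf : (⨅ n : ℕ, (μ : Measure M) (closedBall x (r + 1 / (n + 1))))
      = (μ : Measure M) (closedBall x r) := by
    rw [← Directed.measure_iInter]
    · congr 1
      ext z
      simp only [mem_iInter, mem_closedBall]
      constructor
      · intro h
        refine le_of_forall_pos_le_add fun ε hε => ?_
        obtain ⟨n, hn⟩ := exists_nat_one_div_lt hε
        exact (h n).trans (by linarith [hn.le])
      · intro h n
        have : (0:ℝ) < 1 / (n + 1) := by positivity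
        linarith
    · exact fun n => measurableSet_closedBall.nullMeasurableSet
    · intro m n
      refine ⟨max m n, ?_, ?_⟩ <;>
        · apply closedBall_subset_closedBall
          have h1 : ((m:ℝ)+1) ≤ (max m n : ℕ) + 1 := by
            have := le_max_left m n; exact_mod_cast by omega
          have h2 : ((n:ℝ)+1) ≤ (max m n : ℕ) + 1 := by
            have := le_max_right m n; exact_mod_cast by omega
          gcongr
    · exact ⟨0, measure_ne_top _ _⟩
  obtain ⟨n, hn⟩ : ∃ n : ℕ, (μ : Measure M) (closedBall x (r + 1 / (n + 1))) < y := by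
    by_contra h
    push_neg at h
    exact (not_le.mpr hy) ((le_iInf h).trans_eq h_iInf)
  set δ : ℝ := 1 / (n + 1) with hδ
  have hδpos : 0 < δ := by positivity
  have hF : IsClosed (closedBall x (r + δ)) := isClosed_closedBall
  -- eventually in ν : ν (closedBall x (r+δ)) < y (Portmanteau)
  have hν : ∀ᶠ ν : ProbabilityMeasure M in 𝓝 μ,
      (ν : Measure M) (closedBall x (r + δ)) < y := by
    have hlim := ProbabilityMeasure.limsup_measure_closed_le_of_tendsto
      (tendsto_id (x := 𝓝 μ)) hF
    exact eventually_lt_of_limsup_lt (lt_of_le_of_lt hlim hn)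
  have hx : ∀ᶠ x' : M in 𝓝 x, dist x' x ≤ δ :=
    Filter.Tendsto.eventually_le_const hδpos (tendsto_iff_dist_tendsto_zero.mp tendsto_id) |>.mono
      (fun _ h => h)
  rw [nhds_prod_eq]
  filter_upwards [hν.prod_inl (𝓝 x), hx.prod_inr (𝓝 μ)] with p h1 h2
  calc (p.1 : Measure M) (closedBall p.2 r)
      ≤ (p.1 : Measure M) (closedBall x (r + δ)) := by
        apply measure_mono
        intro z hz
        simp only [mem_closedBall] at hz ⊢
        calc dist z x ≤ dist z p.2 + dist p.2 x := dist_triangle _ _ _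
          _ ≤ r + δ := add_le_add hz h2
    _ < y := h1

end Aux

open Filter Topology Metric Set in
/-- The evaluation map `(μ, x) ↦ μ {x}` is jointly Borel measurable on
`𝒫(M) × M`, where `𝒫(M)` carries the narrow topology and its Borel σ-algebra. -/
theorem stmt6 {M : Type*} [MetricSpace M] [CompactSpace M] [MeasurableSpace M] [BorelSpace M]
    [MeasurableSpace (ProbabilityMeasure M)] [BorelSpace (ProbabilityMeasure M)] :
    Measurable fun p : ProbabilityMeasure M × M => (p.1 : Measure M) {p.2} := by
  have key : ∀ p : ProbabilityMeasure M × M, (p.1 : Measure M) {p.2}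
      = ⨅ n : ℕ, (p.1 : Measure M) (closedBall p.2 (1 / (n + 1))) := by
    rintro ⟨μ, x⟩
    rw [← Directed.measure_iInter]
    · congr 1
      ext z
      simp only [mem_iInter, mem_closedBall, mem_singleton_iff]
      constructor
      · rintro rfl n; rw [dist_self]; positivity
      · intro h
        have : dist z x ≤ 0 := by
          refine le_of_forall_pos_le_add fun ε hε => ?_
          obtain ⟨n, hn⟩ := exists_nat_one_div_lt hε
          exact (h n).trans (by linarith [hn.le])
        exact dist_le_zero.mp this
    · exact fun n => measurableSet_closedBall.nullMeasurableSet
    · intro m n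
      refine ⟨max m n, ?_, ?_⟩ <;>
        · apply closedBall_subset_closedBall
          have h1 : ((m:ℝ)+1) ≤ (max m n : ℕ) + 1 := by
            have := le_max_left m n; exact_mod_cast by omega
          have h2 : ((n:ℝ)+1) ≤ (max m n : ℕ) + 1 := by
            have := le_max_right m n; exact_mod_cast by omega
          gcongr
    · exact ⟨0, measure_ne_top _ _⟩
  simp_rw [key]
  exact Measurable.iInf fun n => (aux_usc _).measurable
end

section
/- Let M be a Hausdorff topological space and η = ∑_{i∈ℕ} s_i δ_{x_i} a purely atomic Borel probability measure on M with pairwise distinct positive masses (s_i ≠ s_j and s_i > 0 for i ≠ j) and with atom set {x_i}_{i∈ℕ} dense in M. If h: M → M is continuous and the push-forward h_♯η equals η, then h(x_i) = x_i for every i, and consequently h is the identity on M. -/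
open MeasureTheory

/-- If `η = ∑ᵢ sᵢ δ_{xᵢ}` is purely atomic with pairwise distinct positive masses and dense
atom set, and `h` is continuous with `h_♯ η = η`, then `h` fixes each atom and `h = id`. -/
theorem stmt16 {M : Type*} [TopologicalSpace M] [T2Space M] [MeasurableSpace M] [BorelSpace M]
    (s : ℕ → ENNReal) (x : ℕ → M)
    (hs_pos : ∀ i, 0 < s i) (hs_ne : ∀ i j, i ≠ j → s i ≠ s j)
    (hx : Function.Injective x) (hsum : ∑' i, s i = 1)
    (hdense : Dense (Set.range x))
    (h : M → M) (hh : Continuous h)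
    (hpush :
      Measure.map h (Measure.sum fun i => s i • Measure.dirac (x i))
        = Measure.sum fun i => s i • Measure.dirac (x i)) :
    (∀ i, h (x i) = x i) ∧ ∀ z, h z = z := by
  classical
  have hm : Measurable h := hh.measurable
  set η : Measure M := Measure.sum fun i => s i • Measure.dirac (x i) with hη
  -- value of η on singletons
  have hsing : ∀ y : M, η {y} = ∑' i, if x i = y then s i else 0 := by
    intro y
    rw [hη, Measure.sum_apply _ (measurableSet_singleton y)]
    congr 1; funext i
    rw [Measure.smul_apply, Measure.dirac_apply]
    by_cases hxy : x i = y
    · simp [hxy]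
    · simp [Set.indicator_apply, hxy]
  have hatom : ∀ k, η {x k} = s k := by
    intro k
    rw [hsing, tsum_eq_single k]
    · simp
    · intro j hj; rw [if_neg]; exact fun e => hj (hx e)
  -- value via pushforward
  have hmap : ∀ y : M, η {y} = ∑' i, if h (x i) = y then s i else 0 := by
    intro y
    conv_lhs => rw [← hpush]
    rw [Measure.map_apply hm (measurableSet_singleton y), hη,
      Measure.sum_apply _ (hm (measurableSet_singleton y))]
    congr 1; funext i
    rw [Measure.smul_apply, Measure.dirac_apply' _ (hm (measurableSet_singleton y))]
    by_cases hxy : h (x i) = y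
    · simp [Set.indicator_apply, Set.mem_preimage, hxy]
    · simp [Set.indicator_apply, Set.mem_preimage, hxy]
  -- each mass is ≤ 1 (finite)
  have hfin : ∀ k, s k ≠ ⊤ := by
    intro k
    have : s k ≤ 1 := hsum ▸ ENNReal.le_tsum k
    exact (this.trans_lt (by norm_num)).ne
  -- every h (x i) is some atom
  have hexists : ∀ i, ∃ k, h (x i) = x k := by
    intro i
    by_contra hc
    push_neg at hc
    have h0 : η {h (x i)} = 0 := by
      rw [hsing, ENNReal.tsum_eq_zero]
      intro j
      rw [if_neg (fun e => hc j e.symm)]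
    have h1 : s i ≤ η {h (x i)} := by
      rw [hmap]
      have := ENNReal.le_tsum (f := fun j => if h (x j) = h (x i) then s j else 0) i
      simpa using this
    rw [h0] at h1
    exact absurd (le_antisymm h1 zero_le) (hs_pos i).ne'
  choose σ hσ using hexists
  -- key identity
  have hkey : ∀ i, s (σ i) = ∑' j, if σ j = σ i then s j else 0 := by
    intro i
    rw [← hatom (σ i), hmap]
    congr 1; funext j
    rw [hσ j]
    by_cases e : σ j = σ i
    · rw [if_pos e, if_pos (by rw [e])]
    · rw [if_neg e, if_neg (fun e' => e (hx e'))]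
  have hle : ∀ i, s i ≤ s (σ i) := by
    intro i
    rw [hkey i]
    have := ENNReal.le_tsum (f := fun j => if σ j = σ i then s j else 0) i
    simpa using this
  -- if σ moves i, it moves σ i as well
  have hmove : ∀ i, σ i ≠ i → σ (σ i) ≠ σ i := by
    intro i hi hfix
    have hdist : i ≠ σ i := fun e => hi e.symm
    have hsumle : s i + s (σ i) ≤ ∑' j, if σ j = σ i then s j else 0 := by
      have hs := ENNReal.sum_le_tsum (f := fun j => if σ j = σ i then s j else 0)
        ({i, σ i} : Finset ℕ)
      rwa [Finset.sum_pair hdist, if_pos rfl, if_pos hfix] at hs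
    rw [← hkey i] at hsumle
    have : s (σ i) < s i + s (σ i) := by
      rw [add_comm]
      exact ENNReal.lt_add_right (hfin (σ i)) (hs_pos i).ne'
    exact absurd hsumle this.not_ge
  have hlt : ∀ i, σ i ≠ i → s i < s (σ i) :=
    fun i hi => (hle i).lt_of_ne (hs_ne i (σ i) (fun e => hi e.symm))
  -- no index is moved
  have hfix : ∀ i, σ i = i := by
    intro i
    by_contra hi
    set a : ℕ → ℕ := fun n => σ^[n] i with ha
    have haB : ∀ n, σ (a n) ≠ a n := by
      intro n
      induction n with
      | zero => simpa [ha] using hi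
      | succ n ih =>
        have : a (n + 1) = σ (a n) := Function.iterate_succ_apply' σ n i
        rw [this]
        exact hmove _ ih
    have hmono : StrictMono (fun n => s (a n)) := by
      apply strictMono_nat_of_lt_succ
      intro n
      have : a (n + 1) = σ (a n) := Function.iterate_succ_apply' σ n i
      rw [this]
      exact hlt _ (haB n)
    have hainj : Function.Injective a := by
      intro m n e
      by_contra hmn
      rcases Ne.lt_or_gt hmn with hl | hl
      · exact absurd (congrArg s e) (hmono hl).ne
      · exact absurd (congrArg s e) (hmono hl).ne'
    have htop : (∑' n, s (a n)) = ⊤ := by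
      refine eq_top_iff.mpr ?_
      calc (⊤ : ENNReal) = ∑' _ : ℕ, s i := (ENNReal.tsum_const_eq_top_of_ne_zero (hs_pos i).ne').symm
        _ ≤ ∑' n, s (a n) := by
            apply ENNReal.tsum_le_tsum
            intro n
            have : a 0 = i := rfl
            calc s i = s (a 0) := by rw [this]
              _ ≤ s (a n) := hmono.monotone (Nat.zero_le n)
    have hle1 : (∑' n, s (a n)) ≤ 1 := by
      calc (∑' n, s (a n)) ≤ ∑' j, s j := ENNReal.tsum_comp_le_tsum_of_injective hainj s
        _ = 1 := hsum
    rw [htop] at hle1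
    exact absurd hle1 (by norm_num)
  have hfixatom : ∀ i, h (x i) = x i := by
    intro i
    rw [hσ i, hfix i]
  refine ⟨hfixatom, ?_⟩
  have : h = id := by
    apply Continuous.ext_on hdense hh continuous_id
    rintro y ⟨i, rfl⟩
    simpa using hfixatom i
  intro z
  exact congrFun this z
end
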